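/- In the lazy list, if a Contains(key) operation returns false and no concurrent Add(key) succeeds during its execution, and the node n_{x-1} at which the traversal's last advance occurred is unmarked at that read, then no node with that key is in the abstract set in the pre-state of the LP read: from n_{x-1}.val < key < n_x.val, n_{x-1} unmarked, and n_{x-1}.next = n_x, it follows node(key) ∉ AbS at that state. -/

import Mathlib

def ReachFrom {Node : Type} (nxt : Node → Option Node) (head n : Node) : Prop :=
  Relation.ReflTransGen (fun a b => nxt a = some b) head n

/-- The abstract set of a lazy-list state: the unmarked nodes reachable from
`Head`. -/
def AbS {Node : Type} (nxt : Node → Option Node) (marked : Node → Bool)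
    (head : Node) : Set Node :=
  {n | ReachFrom nxt head n ∧ marked n = false}

section

variable {Node : Type} {nxt : Node → Option Node} {head a b m : Node}

namespace ReachFrom

theorem rightUnique_next (nxt : Node → Option Node) :
    Relator.RightUnique (fun a b : Node => nxt a = some b) := fun _ _ _ hb hc =>
  Option.some_injective _ (hb.symm.trans hc)

theorem total (ha : ReachFrom nxt head a) (hb : ReachFrom nxt head b) :
    ReachFrom nxt a b ∨ ReachFrom nxt b a :=
  Relation.ReflTransGen.total_of_right_unique (rightUnique_next nxt) ha hb

theorem val_le {α : Type*} [Preorder α] {val : Node → α}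
    (hmono : ∀ a b, nxt a = some b → val a ≤ val b) (h : ReachFrom nxt a b) :
    val a ≤ val b := by
  induction h with
  | refl => exact le_rfl
  | tail _ hstep ih => exact ih.trans (hmono _ _ hstep)

end ReachFrom

/-- The absent-key lemma. Reachable nodes form one chain along which values increase,
so `m` would have to come at or before `a`, or at or after `b`. -/
theorem not_reachFrom_of_lt_of_lt_next {α : Type*} [Preorder α] {val : Node → α}
    (hsort : ∀ a b, nxt a = some b → val a < val b) (ha : ReachFrom nxt head a)
    (hadj : nxt a = some b) (hlo : val a < val m) (hhi : val m < val b) :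
    ¬ ReachFrom nxt head m := by
  have hmono : ∀ a b, nxt a = some b → val a ≤ val b := fun a b h => (hsort a b h).le
  intro hm
  rcases ha.total hm with hafter | hbefore
  · rcases hafter.cases_head with rfl | ⟨c, hc, hcm⟩
    · exact lt_irrefl _ hlo
    · obtain rfl : c = b := ReachFrom.rightUnique_next nxt hc hadj
      exact (ReachFrom.val_le hmono hcm).not_gt hhi
  · exact (ReachFrom.val_le hmono hbefore).not_gt hlo

end

/-- Lazy list, `Contains(key)` returning `false` with no
concurrent successful `Add(key)` during its execution.  The traversal's last
advance read the node `n_{x-1}` (unmarked at that read) with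
`n_{x-1}.next = n_x`, and `n_{x-1}.val < key < n_x.val`.  Then in the
pre-state of the LP read no node with key `key` is in the abstract set:
from `n_{x-1}.val < key < n_x.val`, `n_{x-1}` unmarked, and
`n_{x-1}.next = n_x`, it follows that `node(key) ∉ AbS` at that state. -/
theorem contains_false_abs_pre
    (Node : Type)
    (val : Node → ℤ) (nxt : Node → Option Node)
    (marked : Node → Bool) (head : Node)
    (key : ℤ) (nxm1 nx : Node)
    -- strict sortedness (pre-state of the LP)
    (hsort : ∀ a b, nxt a = some b → val a < val b)
    -- every unmarked node is reachable from Head (pre-state of the LP)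
    (hreach : ∀ m, marked m = false → ReachFrom nxt head m)
    -- n_{x-1} is unmarked at the read, with successor n_x
    (hm : marked nxm1 = false) (hadj : nxt nxm1 = some nx)
    (h1 : val nxm1 < key) (h2 : key < val nx) :
    ∀ m, val m = key → m ∉ AbS nxt marked head := by
  rintro m rfl ⟨hreach_m, -⟩
  exact not_reachFrom_of_lt_of_lt_next hsort (hreach nxm1 hm) hadj h1 h2 hreach_m
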